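/- arXiv:2305.10718 — 7 statements merged into one kernel-verified Lean document; each statement's English description precedes it below -/
import Mathlib

section
/- Fix γ ∈ (0,1), an arm i, a round t, an arbitrary selection sequence i_1,…,i_t ∈ {1,…,K}, and means μ_j(i) ∈ [0,1] for j = 1,…,t, with N_t(γ,i) > 0. If μ_s(i) = μ_t(i) for every integer s with t − D(γ) < s ≤ t, then |μ_t(i) − μ̈_t(γ,i)| ≤ U_t(γ,i). -/
open Real

noncomputable section

/-- `D(γ) = log((1−γ)²·log(1/(1−γ)))/log γ`. -/
def Dgamma (γ : ℝ) : ℝ := Real.log ((1 - γ) ^ 2 * Real.log (1 / (1 - γ))) / Real.log γ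

/-- **Lemma 1.** Fix `γ ∈ (0,1)`, an arm `i`, a round `t`, an arbitrary selection
sequence `i_1,…,i_t` and means `μ_j(i) ∈ [0,1]`, with `N_t(γ,i) > 0`. If
`μ_s(i) = μ_t(i)` for every round `s` with `t − D(γ) < s ≤ t`, then
`|μ_t(i) − μ̈_t(γ,i)| ≤ U_t(γ,i)`, where
`N_t(γ,i) = Σ_{j=1}^t γ^{t−j} 1{i_j = i}`,
`μ̈_t(γ,i) = (1/N_t(γ,i)) Σ_{j=1}^t γ^{t−j} 1{i_j = i} μ_j(i)` and
`U_t(γ,i) = √((1−γ)·log(1/(1−γ))/N_t(γ,i))`. -/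
theorem abs_mean_sub_discounted_mean_le {K : ℕ} (γ : ℝ) (hγ : γ ∈ Set.Ioo (0 : ℝ) 1)
    (i : Fin K) (t : ℕ) (arm : ℕ → Fin K) (μ : ℕ → ℝ)
    (hμ : ∀ j, 1 ≤ j → j ≤ t → μ j ∈ Set.Icc (0 : ℝ) 1)
    (hN : 0 < ∑ j ∈ Finset.Icc 1 t, γ ^ (t - j) * (if arm j = i then (1 : ℝ) else 0))
    (hstat : ∀ s : ℕ, 1 ≤ s → (t : ℝ) - Dgamma γ < (s : ℝ) → s ≤ t → μ s = μ t) :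
    |μ t - (∑ j ∈ Finset.Icc 1 t, γ ^ (t - j) * (if arm j = i then μ j else 0)) /
        (∑ j ∈ Finset.Icc 1 t, γ ^ (t - j) * (if arm j = i then (1 : ℝ) else 0))| ≤
      Real.sqrt ((1 - γ) * Real.log (1 / (1 - γ)) /
        (∑ j ∈ Finset.Icc 1 t, γ ^ (t - j) * (if arm j = i then (1 : ℝ) else 0))) := by
  classical
  obtain ⟨hγ0, hγ1⟩ := hγ
  have h1γ : 0 < 1 - γ := by linarith
  have ht : 1 ≤ t := by
    by_contra h
    push_neg at h
    interval_cases t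
    simp at hN
  set N := ∑ j ∈ Finset.Icc 1 t, γ ^ (t - j) * (if arm j = i then (1 : ℝ) else 0) with hNdef
  set S := ∑ j ∈ Finset.Icc 1 t, γ ^ (t - j) * (if arm j = i then μ j else 0) with hSdef
  have hinv : (1:ℝ) < 1 / (1 - γ) := by
    rw [lt_div_iff₀ h1γ]; linarith
  have hlog : 0 < Real.log (1 / (1 - γ)) := Real.log_pos hinv
  have hA : (0:ℝ) < (1 - γ) ^ 2 * Real.log (1 / (1 - γ)) := by positivity
  have hμt := hμ t ht le_rfl
  set L := (1 - γ) * Real.log (1 / (1 - γ)) with hLdef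
  have hL0 : 0 ≤ L := by positivity
  -- γ ^ D = (1-γ)^2 * log(1/(1-γ))
  have hlogγ : Real.log γ ≠ 0 := ne_of_lt (Real.log_neg hγ0 hγ1)
  have hgD : γ ^ (Dgamma γ) = (1 - γ) ^ 2 * Real.log (1 / (1 - γ)) := by
    rw [Dgamma, Real.rpow_def_of_pos hγ0, mul_comm, div_mul_cancel₀ _ hlogγ,
      Real.exp_log hA]
  set n0 := ⌈Dgamma γ⌉₊ with hn0
  have hpow : γ ^ n0 ≤ (1 - γ) ^ 2 * Real.log (1 / (1 - γ)) := by
    rw [← hgD, ← Real.rpow_natCast γ n0]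
    exact Real.rpow_le_rpow_of_exponent_ge hγ0 hγ1.le (Nat.le_ceil _)
  set Fold := (Finset.Icc 1 t).filter (fun j : ℕ => (j:ℝ) ≤ (t:ℝ) - Dgamma γ) with hFold
  -- sum over old rounds of discount weights is ≤ L
  have hsumold : ∑ j ∈ Fold, γ ^ (t - j) ≤ L := by
    have hinj : ∀ x ∈ Fold, ∀ y ∈ Fold, t - x = t - y → x = y := by
      intro x hx y hy hxy
      simp only [hFold, Finset.mem_filter, Finset.mem_Icc] at hx hy
      omega
    calc ∑ j ∈ Fold, γ ^ (t - j) = ∑ m ∈ Fold.image (fun j => t - j), γ ^ m := by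
          rw [Finset.sum_image hinj]
      _ ≤ ∑ m ∈ Finset.Ico n0 t, γ ^ m := by
          apply Finset.sum_le_sum_of_subset_of_nonneg
          · intro m hm
            simp only [Finset.mem_image] at hm
            obtain ⟨j, hj, rfl⟩ := hm
            simp only [hFold, Finset.mem_filter, Finset.mem_Icc] at hj
            obtain ⟨⟨hj1, hjt⟩, hjold⟩ := hj
            simp only [Finset.mem_Ico]
            constructor
            · rw [hn0, Nat.ceil_le]
              have : (↑(t - j) : ℝ) = (t:ℝ) - (j:ℝ) := by
                rw [Nat.cast_sub hjt]
              rw [this]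
              linarith
            · omega
          · intro m _ _
            positivity
      _ ≤ γ ^ n0 / (1 - γ) := by
          rcases le_or_gt t n0 with h | h
          · rw [Finset.Ico_eq_empty (by omega)]
            simp only [Finset.sum_empty]
            positivity
          · rw [geom_sum_Ico hγ1.ne h.le]
            have h1 : (γ ^ t - γ ^ n0) / (γ - 1) = (γ ^ n0 - γ ^ t) / (1 - γ) := by
              rw [div_eq_div_iff (by linarith) (by linarith)]
              ring
            rw [h1]
            have h2 : (0:ℝ) ≤ γ ^ t := by positivity
            gcongr
            linarith
      _ ≤ L := by
          rw [hLdef, div_le_iff₀ h1γ]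
          calc γ ^ n0 ≤ (1 - γ) ^ 2 * Real.log (1 / (1 - γ)) := hpow
            _ = (1 - γ) * Real.log (1 / (1 - γ)) * (1 - γ) := by ring
  -- the difference as a single sum
  have hT : μ t * N - S = ∑ j ∈ Finset.Icc 1 t,
      γ ^ (t - j) * (if arm j = i then μ t - μ j else 0) := by
    rw [hNdef, hSdef, Finset.mul_sum, ← Finset.sum_sub_distrib]
    apply Finset.sum_congr rfl
    intro j _
    by_cases h : arm j = i <;> simp [h] <;> ring
  have habs : |μ t * N - S| ≤ ∑ j ∈ Fold, γ ^ (t - j) := by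
    rw [hT]
    refine (Finset.abs_sum_le_sum_abs _ _).trans ?_
    rw [← Finset.sum_filter_add_sum_filter_not (Finset.Icc 1 t)
      (fun j : ℕ => (j:ℝ) ≤ (t:ℝ) - Dgamma γ)]
    have h2 : ∑ j ∈ (Finset.Icc 1 t).filter (fun j : ℕ => ¬ ((j:ℝ) ≤ (t:ℝ) - Dgamma γ)),
        |γ ^ (t - j) * (if arm j = i then μ t - μ j else 0)| = 0 := by
      apply Finset.sum_eq_zero
      intro j hj
      simp only [Finset.mem_filter, Finset.mem_Icc, not_le] at hj
      obtain ⟨⟨hj1, hjt⟩, hjrec⟩ := hj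
      rw [hstat j hj1 hjrec hjt]
      simp
    rw [h2, add_zero, ← hFold]
    apply Finset.sum_le_sum
    intro j hj
    simp only [hFold, Finset.mem_filter, Finset.mem_Icc] at hj
    obtain ⟨⟨hj1, hjt⟩, _⟩ := hj
    have hμj := hμ j hj1 hjt
    rw [abs_mul, abs_of_nonneg (by positivity : (0:ℝ) ≤ γ ^ (t - j))]
    have : |if arm j = i then μ t - μ j else 0| ≤ 1 := by
      by_cases h : arm j = i <;> simp [h, abs_le]
      constructor <;> [linarith [hμt.1, hμj.2]; linarith [hμt.2, hμj.1]]
    nlinarith [pow_nonneg hγ0.le (t - j)]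
  have hmain : |μ t - S / N| ≤ L / N := by
    have heq : μ t - S / N = (μ t * N - S) / N := by
      field_simp
    rw [heq, abs_div, abs_of_pos hN]
    gcongr
    exact habs.trans hsumold
  have hone : |μ t - S / N| ≤ 1 := by
    have hS0 : 0 ≤ S := by
      apply Finset.sum_nonneg
      intro j hj
      simp only [Finset.mem_Icc] at hj
      have := hμ j hj.1 hj.2
      by_cases h : arm j = i <;> simp [h]
      exact mul_nonneg (by positivity) this.1
    have hSN : S ≤ N := by
      apply Finset.sum_le_sum
      intro j hj
      simp only [Finset.mem_Icc] at hj
      have hμj := hμ j hj.1 hj.2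
      by_cases h : arm j = i <;> simp [h]
      have h2 : γ ^ (t - j) * μ j ≤ γ ^ (t - j) * 1 :=
        mul_le_mul_of_nonneg_left hμj.2 (by positivity)
      linarith
    have h1 : 0 ≤ S / N := div_nonneg hS0 hN.le
    have h2 : S / N ≤ 1 := (div_le_one hN).mpr hSN
    rw [abs_le]
    constructor <;> [linarith [hμt.1]; linarith [hμt.2]]
  have hx : 0 ≤ L / N := div_nonneg hL0 hN.le
  rcases le_or_gt (L / N) 1 with h | h
  · refine hmain.trans ?_
    nlinarith [Real.sq_sqrt hx, Real.sqrt_nonneg (L / N)]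
  · refine hone.trans ?_
    nlinarith [Real.sq_sqrt hx, Real.sqrt_nonneg (L / N)]
end
end

section
/- Fix γ ∈ (0,1), an arm i, a round t, an arbitrary selection sequence i_1,…,i_t ∈ {1,…,K}, and means μ_j(i) ∈ [0,1] for j = 1,…,t, with N_t(γ,i) > 0. If there exists σ > 0 such that |μ_s(i) − μ_{s'}(i)| ≤ σ|s − s'| for all s, s' ∈ {1,…,t}, then |μ_t(i) − μ̈_t(γ,i)| ≤ U_t(γ,i) + σ·D(γ). -/
open Real

noncomputable section

/-- **Lemma 2.** Fix `γ ∈ (0,1)`, an arm `i`, a round `t`, an arbitrary selection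
sequence `i_1,…,i_t` and means `μ_j(i) ∈ [0,1]`, with `N_t(γ,i) > 0`. If there exists
`σ > 0` such that `|μ_s(i) − μ_{s'}(i)| ≤ σ|s − s'|` for all `s, s' ∈ {1,…,t}`, then
`|μ_t(i) − μ̈_t(γ,i)| ≤ U_t(γ,i) + σ·D(γ)`, where
`N_t(γ,i) = Σ_{j=1}^t γ^{t−j} 1{i_j = i}`,
`μ̈_t(γ,i) = (1/N_t(γ,i)) Σ_{j=1}^t γ^{t−j} 1{i_j = i} μ_j(i)` and
`U_t(γ,i) = √((1−γ)·log(1/(1−γ))/N_t(γ,i))`. -/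
theorem abs_mean_sub_discounted_mean_le_of_lipschitz {K : ℕ} (γ : ℝ)
    (hγ : γ ∈ Set.Ioo (0 : ℝ) 1)
    (i : Fin K) (t : ℕ) (arm : ℕ → Fin K) (μ : ℕ → ℝ)
    (hμ : ∀ j, 1 ≤ j → j ≤ t → μ j ∈ Set.Icc (0 : ℝ) 1)
    (hN : 0 < ∑ j ∈ Finset.Icc 1 t, γ ^ (t - j) * (if arm j = i then (1 : ℝ) else 0))
    (σ : ℝ) (hσ : 0 < σ)
    (hlip : ∀ s s' : ℕ, 1 ≤ s → s ≤ t → 1 ≤ s' → s' ≤ t →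
      |μ s - μ s'| ≤ σ * |(s : ℝ) - (s' : ℝ)|) :
    |μ t - (∑ j ∈ Finset.Icc 1 t, γ ^ (t - j) * (if arm j = i then μ j else 0)) /
        (∑ j ∈ Finset.Icc 1 t, γ ^ (t - j) * (if arm j = i then (1 : ℝ) else 0))| ≤
      Real.sqrt ((1 - γ) * Real.log (1 / (1 - γ)) /
        (∑ j ∈ Finset.Icc 1 t, γ ^ (t - j) * (if arm j = i then (1 : ℝ) else 0))) +
        σ * Dgamma γ := by
  obtain ⟨hγ0, hγ1⟩ := hγ
  have hu : (0:ℝ) < 1 - γ := by linarith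
  set L : ℝ := Real.log (1 / (1 - γ)) with hLdef
  have hL : 0 < L := Real.log_pos (by rw [lt_div_iff₀ hu]; linarith)
  have harg0 : 0 < (1 - γ)^2 * L := by positivity
  have harg1 : (1 - γ)^2 * L < 1 := by
    have h1 : L ≤ 1/(1-γ) - 1 := Real.log_le_sub_one_of_pos (by positivity)
    have h2 : (1-γ)^2 * (1/(1-γ) - 1) < 1 := by
      rw [mul_sub]
      have : (1-γ)^2 * (1/(1-γ)) = 1 - γ := by field_simp
      nlinarith [sq_nonneg (1-γ)]
    nlinarith [sq_nonneg (1-γ)]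
  have hlogγ : Real.log γ < 0 := Real.log_neg hγ0 hγ1
  have hD0 : 0 < Dgamma γ := div_pos_of_neg_of_neg (Real.log_neg harg0 harg1) hlogγ
  set D := Dgamma γ with hDdef
  have hγD : γ ^ D = (1 - γ)^2 * L := by
    rw [Real.rpow_def_of_pos hγ0]
    rw [show Real.log γ * D = Real.log ((1-γ)^2 * L) by
      rw [hDdef]; unfold Dgamma; rw [← hLdef]; field_simp [hlogγ.ne]]
    exact Real.exp_log harg0
  have ht1 : 1 ≤ t := by
    by_contra h
    push_neg at h
    have : t = 0 := by omega
    subst this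
    simp at hN
  set N := ∑ j ∈ Finset.Icc 1 t, γ ^ (t - j) * (if arm j = i then (1 : ℝ) else 0) with hNdef
  set M := ∑ j ∈ Finset.Icc 1 t, γ ^ (t - j) * (if arm j = i then μ j else 0) with hMdef
  set a : ℕ → ℝ := fun j => γ ^ (t - j) * (if arm j = i then (1 : ℝ) else 0) with hadef
  have ha_nonneg : ∀ j, 0 ≤ a j := by
    intro j; dsimp [a]; positivity
  have ha_le : ∀ j, a j ≤ γ ^ (t - j) := by
    intro j; dsimp [a]
    by_cases h : arm j = i <;> simp [h] <;> positivity
  have hμt := hμ t ht1 le_rfl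
  -- the signed difference as a weighted sum
  have hsum : μ t * N - M = ∑ j ∈ Finset.Icc 1 t, a j * (μ t - μ j) := by
    rw [hNdef, hMdef, Finset.mul_sum, ← Finset.sum_sub_distrib]
    apply Finset.sum_congr rfl
    intro j _
    by_cases h : arm j = i <;> simp [a, h] <;> ring
  have hdiff : μ t - M / N = (∑ j ∈ Finset.Icc 1 t, a j * (μ t - μ j)) / N := by
    rw [← hsum]; field_simp
  -- per-term bound
  have hterm : ∀ j ∈ Finset.Icc 1 t,
      |a j * (μ t - μ j)| ≤ a j * (σ * D) + (if D < ((t - j : ℕ) : ℝ) then γ ^ (t - j) else 0) := by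
    intro j hj
    simp only [Finset.mem_Icc] at hj
    have hμj := hμ j hj.1 hj.2
    rw [abs_mul, abs_of_nonneg (ha_nonneg j)]
    by_cases hc : D < ((t - j : ℕ) : ℝ)
    · rw [if_pos hc]
      have h1 : |μ t - μ j| ≤ 1 := by
        rw [abs_le]
        constructor
        · linarith [hμt.1, hμj.2]
        · linarith [hμt.2, hμj.1]
      have h2 : a j * |μ t - μ j| ≤ γ ^ (t - j) := by
        calc a j * |μ t - μ j| ≤ γ ^ (t - j) * 1 :=
              mul_le_mul (ha_le j) h1 (abs_nonneg _) (by positivity)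
          _ = γ ^ (t - j) := mul_one _
      have h3 : 0 ≤ a j * (σ * D) := by positivity
      linarith
    · rw [if_neg hc]
      push_neg at hc
      have hcast : ((t - j : ℕ) : ℝ) = (t : ℝ) - (j : ℝ) := by
        push_cast [Nat.cast_sub hj.2]; ring
      have hlj : |μ t - μ j| ≤ σ * D := by
        have h := hlip t j ht1 le_rfl hj.1 hj.2
        have habs : |(t : ℝ) - (j : ℝ)| = ((t - j : ℕ) : ℝ) := by
          rw [hcast, abs_of_nonneg]
          have : (j : ℝ) ≤ (t : ℝ) := by exact_mod_cast hj.2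
          linarith
        rw [habs] at h
        calc |μ t - μ j| ≤ σ * ((t - j : ℕ) : ℝ) := h
          _ ≤ σ * D := by
              apply mul_le_mul_of_nonneg_left hc hσ.le
      have := mul_le_mul_of_nonneg_left hlj (ha_nonneg j)
      have h0 : (0:ℝ) ≤ 0 := le_rfl
      linarith
  -- bounding the sum of far terms
  have hfar : (∑ j ∈ Finset.Icc 1 t, (if D < ((t - j : ℕ) : ℝ) then γ ^ (t - j) else 0))
      ≤ (1 - γ) * L := by
    have hre : (∑ j ∈ Finset.Icc 1 t, (if D < ((t - j : ℕ) : ℝ) then γ ^ (t - j) else 0))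
        = ∑ k ∈ Finset.range t, (if D < (k : ℝ) then γ ^ k else 0) := by
      apply Finset.sum_nbij' (fun j => t - j) (fun k => t - k)
      · intro j hj
        simp only [Finset.mem_Icc] at hj
        simp only [Finset.mem_range]
        omega
      · intro k hk
        simp only [Finset.mem_range] at hk
        simp only [Finset.mem_Icc]
        omega
      · intro j hj
        simp only [Finset.mem_Icc] at hj
        omega
      · intro k hk
        simp only [Finset.mem_range] at hk
        omega
      · intro j _
        rfl
    rw [hre, ← Finset.sum_filter]
    set m := ⌊D⌋₊ with hmdef
    set T := max t (m + 1) with hTdef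
    have hsub : (Finset.range t).filter (fun k : ℕ => D < (k : ℝ)) ⊆ Finset.Ico (m + 1) T := by
      intro k hk
      simp only [Finset.mem_filter, Finset.mem_range] at hk
      simp only [Finset.mem_Ico]
      constructor
      · have hmk : (m : ℝ) ≤ D := Nat.floor_le hD0.le
        have : (m : ℝ) < (k : ℝ) := lt_of_le_of_lt hmk hk.2
        exact_mod_cast this
      · exact lt_of_lt_of_le hk.1 (le_max_left _ _)
    have h1 : (∑ k ∈ (Finset.range t).filter (fun k : ℕ => D < (k : ℝ)), γ ^ k)
        ≤ ∑ k ∈ Finset.Ico (m + 1) T, γ ^ k := by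
      apply Finset.sum_le_sum_of_subset_of_nonneg hsub
      intro k _ _; positivity
    have h2 : (∑ k ∈ Finset.Ico (m + 1) T, γ ^ k) = (γ ^ T - γ ^ (m + 1)) / (γ - 1) :=
      geom_sum_Ico hγ1.ne (le_max_right _ _)
    have h3 : (γ ^ T - γ ^ (m + 1)) / (γ - 1) ≤ γ ^ (m + 1) / (1 - γ) := by
      have heq : (γ ^ T - γ ^ (m + 1)) / (γ - 1) = (γ ^ (m + 1) - γ ^ T) / (1 - γ) := by
        rw [div_eq_div_iff (by linarith) (by linarith)]; ring
      rw [heq, div_le_div_iff₀ hu hu]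
      have hT0 : (0:ℝ) ≤ γ ^ T := by positivity
      nlinarith
    have hpow : γ ^ (m + 1) ≤ (1 - γ)^2 * L := by
      rw [← hγD, ← Real.rpow_natCast γ (m + 1)]
      apply Real.rpow_le_rpow_of_exponent_ge hγ0 hγ1.le
      push_cast
      exact (Nat.lt_floor_add_one D).le
    have h4 : γ ^ (m + 1) / (1 - γ) ≤ (1 - γ) * L := by
      rw [div_le_iff₀ hu]
      calc γ ^ (m + 1) ≤ (1 - γ)^2 * L := hpow
        _ = (1 - γ) * L * (1 - γ) := by ring
    linarith
  -- claim A
  have keyA : |μ t - M / N| ≤ σ * D + (1 - γ) * L / N := by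
    rw [hdiff, abs_div, abs_of_pos hN]
    rw [div_le_iff₀ hN]
    calc |∑ j ∈ Finset.Icc 1 t, a j * (μ t - μ j)|
        ≤ ∑ j ∈ Finset.Icc 1 t, |a j * (μ t - μ j)| := Finset.abs_sum_le_sum_abs _ _
      _ ≤ ∑ j ∈ Finset.Icc 1 t,
            (a j * (σ * D) + (if D < ((t - j : ℕ) : ℝ) then γ ^ (t - j) else 0)) :=
          Finset.sum_le_sum hterm
      _ = (σ * D) * N + ∑ j ∈ Finset.Icc 1 t, (if D < ((t - j : ℕ) : ℝ) then γ ^ (t - j) else 0) := by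
          rw [Finset.sum_add_distrib, hNdef, Finset.mul_sum]
          congr 1
          apply Finset.sum_congr rfl
          intro j _
          dsimp [a]; ring
      _ ≤ (σ * D) * N + (1 - γ) * L := by linarith
      _ = (σ * D + (1 - γ) * L / N) * N := by field_simp
  set B := (1 - γ) * L / N with hBdef
  have hB0 : 0 ≤ B := by positivity
  by_cases hB1 : B ≤ 1
  · have hsq : B ≤ Real.sqrt B := by
      nlinarith [Real.sq_sqrt hB0, Real.sqrt_nonneg B]
    linarith
  · push_neg at hB1
    have hs1 : 1 ≤ Real.sqrt B := Real.one_le_sqrt.mpr hB1.le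
    have hM0 : 0 ≤ M := by
      rw [hMdef]
      apply Finset.sum_nonneg
      intro j hj
      simp only [Finset.mem_Icc] at hj
      have := (hμ j hj.1 hj.2).1
      by_cases h : arm j = i <;> simp [h] <;> positivity
    have hMN : M ≤ N := by
      rw [hMdef, hNdef]
      apply Finset.sum_le_sum
      intro j hj
      simp only [Finset.mem_Icc] at hj
      have := (hμ j hj.1 hj.2).2
      by_cases h : arm j = i <;> simp [h]
      · exact mul_le_of_le_one_right (by positivity) this
    have hdiv1 : M / N ≤ 1 := by
      rw [div_le_one hN]; exact hMN
    have hdiv0 : 0 ≤ M / N := by positivity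
    have htriv : |μ t - M / N| ≤ 1 := by
      rw [abs_le]
      constructor
      · linarith [hμt.1]
      · linarith [hμt.2]
    have hσD : 0 ≤ σ * D := by positivity
    linarith
end
end

section
/- For any γ ∈ (0,1), any real A > 0, any positive integer T, any arm i ∈ {1,…,K}, and any selection sequence i_1,…,i_T ∈ {1,…,K}: Σ_{t=1}^T 1{i_t = i and N_t(γ,i) < A} ≤ ⌈T(1−γ)⌉ · A · γ^{−1/(1−γ)}. -/
open Real

/-- **Lemma (Garivier–Moulines).** For any `γ ∈ (0,1)`, any real `A > 0`, any positive
integer `T`, any arm `i`, and any selection sequence `i_1,…,i_T`: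
`Σ_{t=1}^T 1{i_t = i and N_t(γ,i) < A} ≤ ⌈T(1−γ)⌉·A·γ^{−1/(1−γ)}`, where
`N_t(γ,i) = Σ_{j=1}^t γ^{t−j} 1{i_j = i}`. -/
theorem sum_indicator_discounted_plays_lt_le {K : ℕ} (γ A : ℝ)
    (hγ : γ ∈ Set.Ioo (0 : ℝ) 1) (hA : 0 < A) (T : ℕ) (hT : 0 < T)
    (i : Fin K) (arm : ℕ → Fin K) :
    ∑ t ∈ Finset.Icc 1 T,
        (if arm t = i ∧
            (∑ j ∈ Finset.Icc 1 t, γ ^ (t - j) * (if arm j = i then (1 : ℝ) else 0)) < A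
          then (1 : ℝ) else 0) ≤
      (⌈(T : ℝ) * (1 - γ)⌉₊ : ℝ) * A * γ ^ (-(1 / (1 - γ))) := by
  obtain ⟨hγ0, hγ1⟩ := hγ
  have hu : (0:ℝ) < 1 - γ := by linarith
  set x : ℝ := 1 / (1 - γ) with hx
  have hx1 : (1:ℝ) ≤ x := by
    rw [hx, le_div_iff₀ hu]; linarith
  set D : ℕ := ⌈x⌉₊ with hDdef
  have hD1 : 1 ≤ D := Nat.one_le_ceil_iff.mpr (by linarith)
  have hD0 : 0 < D := hD1
  have hDx : x ≤ (D:ℝ) := Nat.le_ceil x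
  have hDm1 : ((D - 1 : ℕ) : ℝ) ≤ x := by
    have h1 : (D:ℝ) < x + 1 := Nat.ceil_lt_add_one (by linarith)
    have h2 : ((D - 1 : ℕ) : ℝ) = (D:ℝ) - 1 := by
      rw [Nat.cast_sub hD1]; norm_num
    linarith
  set M : ℕ := ⌈(T : ℝ) * (1 - γ)⌉₊ with hMdef
  have hM0 : 0 < M := by
    refine Nat.ceil_pos.mpr ?_
    have : (0:ℝ) < (T:ℝ) := by exact_mod_cast hT
    positivity
  -- T ≤ M * D
  have hTMD : T ≤ M * D := by
    have h1 : (T:ℝ) * (1 - γ) ≤ (M:ℝ) := Nat.le_ceil _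
    have h2 : x ≤ (D:ℝ) := hDx
    have hT0 : (0:ℝ) ≤ (T:ℝ) := Nat.cast_nonneg _
    have hD0' : (0:ℝ) ≤ (D:ℝ) := Nat.cast_nonneg _
    have hxD : (1:ℝ) ≤ (1 - γ) * (D:ℝ) := by
      have : x * (1 - γ) = 1 := by
        rw [hx]; field_simp
      nlinarith
    have : (T:ℝ) ≤ (M:ℝ) * (D:ℝ) := by nlinarith
    exact_mod_cast this
  -- power comparison : γ ^ x ≤ γ ^ (D-1) (nat pow)
  have hγx0 : (0:ℝ) < γ ^ x := Real.rpow_pos_of_pos hγ0 x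
  have hpow : γ ^ x ≤ γ ^ (D - 1) := by
    have := Real.rpow_le_rpow_of_exponent_ge hγ0 hγ1.le hDm1
    rwa [Real.rpow_natCast] at this
  have hpow0 : (0:ℝ) < γ ^ (D - 1) := pow_pos hγ0 _
  set N : ℕ → ℝ := fun t =>
    ∑ j ∈ Finset.Icc 1 t, γ ^ (t - j) * (if arm j = i then (1 : ℝ) else 0) with hN
  -- fibering by block index
  have hmap : ∀ t ∈ Finset.Icc 1 T, (t - 1) / D ∈ Finset.range M := by
    intro t ht
    rw [Finset.mem_Icc] at ht
    rw [Finset.mem_range]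
    rw [Nat.div_lt_iff_lt_mul hD0]
    omega
  rw [← Finset.sum_fiberwise_of_maps_to hmap]
  -- per-block bound
  have hblock : ∀ b ∈ Finset.range M,
      (∑ t ∈ (Finset.Icc 1 T).filter (fun t => (t - 1) / D = b),
        (if arm t = i ∧ N t < A then (1:ℝ) else 0)) ≤ A * γ ^ (-x) := by
    intro b _
    rw [Finset.sum_boole]
    set s' := ((Finset.Icc 1 T).filter (fun t => (t - 1) / D = b)).filter
      (fun t => arm t = i ∧ N t < A) with hs'
    rcases s'.eq_empty_or_nonempty with he | hne
    · rw [he]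
      simp only [Finset.card_empty, Nat.cast_zero]
      positivity
    · set tm := s'.max' hne with htm
      have htm_mem : tm ∈ s' := s'.max'_mem hne
      have htm_props := htm_mem
      rw [hs', Finset.mem_filter, Finset.mem_filter, Finset.mem_Icc] at htm_props
      obtain ⟨⟨⟨htm1, htmT⟩, htmb⟩, harm, hNtm⟩ := htm_props
      -- membership facts for j ∈ s'
      have hmem : ∀ j ∈ s', 1 ≤ j ∧ j ≤ tm ∧ (j - 1) / D = b ∧ arm j = i := by
        intro j hj
        have hle := Finset.le_max' s' j hj
        rw [hs', Finset.mem_filter, Finset.mem_filter, Finset.mem_Icc] at hj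
        exact ⟨hj.1.1.1, hle, hj.1.2, hj.2.1⟩
      -- key: card s' * γ^(D-1) ≤ N tm
      have hkey : (s'.card : ℝ) * γ ^ (D - 1) ≤ N tm := by
        have hsub : s' ⊆ Finset.Icc 1 tm := by
          intro j hj
          obtain ⟨h1, h2, _, _⟩ := hmem j hj
          exact Finset.mem_Icc.mpr ⟨h1, h2⟩
        have h1 : (s'.card : ℝ) * γ ^ (D - 1) =
            ∑ _j ∈ s', γ ^ (D - 1) := by
          rw [Finset.sum_const, nsmul_eq_mul]
        rw [h1]
        have h2 : ∑ j ∈ s', γ ^ (D - 1) ≤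
            ∑ j ∈ s', γ ^ (tm - j) * (if arm j = i then (1:ℝ) else 0) := by
          apply Finset.sum_le_sum
          intro j hj
          obtain ⟨hj1, hj2, hjb, hji⟩ := hmem j hj
          rw [hji, if_pos rfl, mul_one]
          apply pow_le_pow_of_le_one hγ0.le hγ1.le
          -- tm - j ≤ D - 1 within the same block
          have hd1 := Nat.div_add_mod (tm - 1) D
          have hd2 := Nat.div_add_mod (j - 1) D
          have hm1 : (tm - 1) % D < D := Nat.mod_lt _ hD0
          have hm2 : (j - 1) % D < D := Nat.mod_lt _ hD0
          rw [htmb] at hd1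
          rw [hjb] at hd2
          omega
        refine h2.trans ?_
        apply Finset.sum_le_sum_of_subset_of_nonneg hsub
        intro j _ _
        have : (0:ℝ) ≤ (if arm j = i then (1:ℝ) else 0) := by positivity
        positivity
      -- conclude
      have hlt : (s'.card : ℝ) * γ ^ (D - 1) < A := lt_of_le_of_lt hkey hNtm
      have hcard : (s'.card : ℝ) ≤ A / γ ^ (D - 1) := by
        rw [le_div_iff₀ hpow0]; linarith
      refine hcard.trans ?_
      rw [Real.rpow_neg hγ0.le, div_eq_mul_inv]
      gcongr
  calc ∑ b ∈ Finset.range M, ∑ t ∈ (Finset.Icc 1 T).filter (fun t => (t - 1) / D = b),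
        (if arm t = i ∧ N t < A then (1:ℝ) else 0)
      ≤ ∑ _b ∈ Finset.range M, A * γ ^ (-x) := Finset.sum_le_sum hblock
    _ = (M:ℝ) * A * γ ^ (-x) := by
        rw [Finset.sum_const, nsmul_eq_mul, Finset.card_range, mul_assoc]
end

section
/- Let θ_1,…,θ_K be independent real-valued random variables whose distributions are atomless (so that almost surely there is a unique maximizer), let i* ∈ {1,…,K} be a fixed index, let y ∈ ℝ, and set p = P(θ_{i*} > y), assumed strictly positive. Then for every index i ≠ i*: P(θ_i > θ_j for all j ≠ i, and θ_i < y) ≤ ((1−p)/p) · P(θ_{i*} > θ_j for all j ≠ i*, and θ_i < y). -/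
/-!
Let `C` be the event that `θ i` beats every `θ j` with `j ∉ {i, i*}` and that `θ i < y`. It is
determined by the samples other than `θ i*`, hence independent of `θ i*`. If arm `i` wins below
`y`, then `C` holds and `θ i* < θ i < y`; if `C` holds and `θ i* > y`, then arm `i*` wins while
`θ i < y`. Independence turns these two inclusions into `P(A) ≤ (1 - p) P(C)` and
`p P(C) ≤ P(B)`.
-/

open MeasureTheory ProbabilityTheory

lemma measureReal_le_div_mul_of_indep {Ω : Type*} {m₁ m₂ mΩ : MeasurableSpace Ω}
    {P : Measure Ω} [IsProbabilityMeasure P] (hindep : Indep m₁ m₂ P) (hm₂ : m₂ ≤ mΩ)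
    {A B C E : Set Ω} (hC : MeasurableSet[m₁] C) (hE : MeasurableSet[m₂] E)
    (hA : A ⊆ C ∩ Eᶜ) (hB : C ∩ E ⊆ B) (hpos : 0 < P.real E) :
    P.real A ≤ (1 - P.real E) / P.real E * P.real B := by
  have hmul (F : Set Ω) (hF : MeasurableSet[m₂] F) : P.real (C ∩ F) = P.real C * P.real F := by
    simp only [measureReal_def, (hindep.indepSet_of_measurableSet hC hF).measure_inter_eq_mul,
      ENNReal.toReal_mul]
  have hA_le : P.real A ≤ P.real C * (1 - P.real E) := by
    rw [← probReal_compl_eq_one_sub (hm₂ _ hE), ← hmul _ hE.compl]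
    exact measureReal_mono hA
  have hB_ge : P.real C * P.real E ≤ P.real B := hmul E hE ▸ measureReal_mono hB
  have hE_le : 0 ≤ 1 - P.real E := sub_nonneg.2 measureReal_le_one
  rw [div_mul_eq_mul_div, le_div_iff₀ hpos]
  nlinarith

theorem thompson_transfer_lemma_general {K : ℕ} {Ω : Type*} [MeasurableSpace Ω]
    (P : Measure Ω) [IsProbabilityMeasure P]
    (θ : Fin K → Ω → ℝ) (hmeas : ∀ i, Measurable (θ i))
    (hindep : iIndepFun θ P)
    (istar : Fin K) (y : ℝ) (p : ℝ)
    (hp : p = (P {ω | y < θ istar ω}).toReal) (hppos : 0 < p)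
    (i : Fin K) (hi : i ≠ istar) :
    (P {ω | (∀ j, j ≠ i → θ j ω < θ i ω) ∧ θ i ω < y}).toReal ≤
      ((1 - p) / p) *
        (P {ω | (∀ j, j ≠ istar → θ j ω < θ istar ω) ∧ θ i ω < y}).toReal := by
  let σ (T : Set (Fin K)) : MeasurableSpace Ω := ⨆ j ∈ T, MeasurableSpace.comap (θ j) inferInstance
  have hθ {T : Set (Fin K)} {j : Fin K} (hj : j ∈ T) : Measurable[σ T] (θ j) :=
    Measurable.of_comap_le (le_biSup (fun j => MeasurableSpace.comap (θ j) inferInstance) hj)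
  have hσ : Indep (σ {istar}ᶜ) (σ {istar}) P :=
    indep_iSup_of_disjoint (fun j => (hmeas j).comap_le) hindep.iIndep disjoint_compl_left
  have hC : MeasurableSet[σ {istar}ᶜ]
      {ω | (∀ j, j ≠ i → j ≠ istar → θ j ω < θ i ω) ∧ θ i ω < y} := by
    have hθi : Measurable[σ {istar}ᶜ] (θ i) := hθ hi
    simp only [Set.ofPred_and, Set.ofPred_forall]
    exact .inter (.iInter fun j => .iInter fun _ => .iInter fun hj => measurableSet_lt (hθ hj) hθi)
      (measurableSet_lt hθi measurable_const)
  subst hp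
  refine measureReal_le_div_mul_of_indep hσ (iSup₂_le fun j _ => (hmeas j).comap_le) hC
    (measurableSet_lt measurable_const (hθ rfl)) ?_ ?_ hppos
  · rintro ω ⟨hmax, hlt⟩
    exact ⟨⟨fun j hji _ => hmax j hji, hlt⟩, not_lt.2 ((hmax istar hi.symm).trans hlt).le⟩
  · rintro ω ⟨⟨hmax, hlt⟩, hy⟩
    refine ⟨fun j hj => ?_, hlt⟩
    rcases eq_or_ne j i with rfl | hji
    · exact hlt.trans hy
    · exact ((hmax j hji hj).trans hlt).trans hy

/-- **Lemma 5 (Thompson-sampling transfer lemma, after Agrawal–Goyal).**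
Let `θ_1,…,θ_K` be independent real-valued random variables with atomless distributions
(so that almost surely there is a unique maximizer), let `i*` be a fixed index, `y ∈ ℝ`,
and let `p = P(θ_{i*} > y)` be strictly positive. Then for every index `i ≠ i*`:
`P(θ_i > θ_j ∀ j ≠ i, and θ_i < y) ≤ ((1−p)/p)·P(θ_{i*} > θ_j ∀ j ≠ i*, and θ_i < y)`. -/
theorem thompson_transfer_lemma {K : ℕ} {Ω : Type*} [MeasurableSpace Ω]
    (P : Measure Ω) [IsProbabilityMeasure P]
    (θ : Fin K → Ω → ℝ) (hmeas : ∀ i, Measurable (θ i))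
    (hindep : iIndepFun θ P)
    (hatomless : ∀ (i : Fin K) (x : ℝ), P {ω | θ i ω = x} = 0)
    (istar : Fin K) (y : ℝ) (p : ℝ)
    (hp : p = (P {ω | y < θ istar ω}).toReal) (hppos : 0 < p)
    (i : Fin K) (hi : i ≠ istar) :
    (P {ω | (∀ j, j ≠ i → θ j ω < θ i ω) ∧ θ i ω < y}).toReal ≤
      ((1 - p) / p) *
        (P {ω | (∀ j, j ≠ istar → θ j ω < θ istar ω) ∧ θ i ω < y}).toReal :=
  thompson_transfer_lemma_general P θ hmeas hindep istar y p hp hppos i hi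
end

section
/- Let r be an integer with r ≥ e^{25}, let m ∈ ℝ, s > 0, and let X_1,…,X_r be i.i.d. Gaussian random variables with mean m and variance s². Set z = √(log r) + 1. Then P(max_{1≤j≤r} X_j > m + z·s) ≥ 1 − 1/r². -/
open MeasureTheory ProbabilityTheory Real Set
open scoped NNReal

/-!
For `z ≥ 1` a standard Gaussian satisfies `P(Z > z) ≥ φ(z) (z² - 1) / z³`: the right side of
`e^{-(z+u)²/2} ≥ e^{-z²/2} e^{-zu} (1 - u²/2)` has an elementary antiderivative, and integrating
over `[0, √2]`, where `1 - u²/2 ≥ 0`, gives `∫_z^{z+√2} e^{-x²/2} dx ≥ e^{-z²/2} (1/z - 1/z³)`.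
By independence `P(max_j X_j ≤ m + z s) = (1 - p)^r ≤ e^{-r p}` with `p = P(Z > z)`, and for
`z = √(log r) + 1`, `log r ≥ 25` an elementary estimate gives `r p ≥ 2 log r`.
-/

lemma exp_neg_sq_div_two_mul_le_integral {z : ℝ} (hz : 1 ≤ z) :
    exp (-z ^ 2 / 2) * ((z ^ 2 - 1) / z ^ 3) ≤ ∫ x in z..z + √2, exp (-x ^ 2 / 2) := by
  have hz0 : 0 < z := by linarith
  set F : ℝ → ℝ := fun u ↦ exp (-z * u) * (u ^ 2 / (2 * z) + u / z ^ 2 + (1 / z ^ 3 - 1 / z))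
  have hF : ∀ u, HasDerivAt F (exp (-z * u) * (1 - u ^ 2 / 2)) u := fun u ↦ by
    refine (((hasDerivAt_id u).const_mul (-z)).exp.mul
      ((((hasDerivAt_pow 2 u).div_const (2 * z)).add
        ((hasDerivAt_id u).div_const (z ^ 2))).add_const (1 / z ^ 3 - 1 / z))).congr_deriv ?_
    simp only [id, Pi.add_apply]
    field_simp
    ring
  have hF_integral : ∫ u in (0 : ℝ)..√2, exp (-z * u) * (1 - u ^ 2 / 2) = F √2 - F 0 :=
    intervalIntegral.integral_eq_sub_of_hasDerivAt (fun u _ ↦ hF u)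
      ((by fun_prop : Continuous fun u ↦ exp (-z * u) * (1 - u ^ 2 / 2)).intervalIntegrable _ _)
  have hF0 : F 0 = 1 / z ^ 3 - 1 / z := by simp [F]
  have hF_sqrt_two : 0 ≤ F √2 := by
    have : (2 : ℝ) / (2 * z) = 1 / z := by field_simp
    simp only [F, sq_sqrt zero_le_two, this]
    have : 0 ≤ √2 / z ^ 2 + 1 / z ^ 3 := by positivity
    exact mul_nonneg (exp_pos _).le (by linarith)
  have hpoint : ∀ u, exp (-z ^ 2 / 2) * (exp (-z * u) * (1 - u ^ 2 / 2)) ≤ exp (-(u + z) ^ 2 / 2) :=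
    fun u ↦ by
    have h : exp (-(u + z) ^ 2 / 2) = exp (-z ^ 2 / 2) * (exp (-z * u) * exp (-u ^ 2 / 2)) := by
      rw [← exp_add, ← exp_add]; ring_nf
    rw [h]
    gcongr
    linarith [add_one_le_exp (-u ^ 2 / 2)]
  calc exp (-z ^ 2 / 2) * ((z ^ 2 - 1) / z ^ 3)
      ≤ exp (-z ^ 2 / 2) * (F √2 - F 0) := by
        gcongr
        rw [hF0, show (z ^ 2 - 1) / z ^ 3 = 1 / z - 1 / z ^ 3 by field_simp]
        linarith
    _ = ∫ u in (0 : ℝ)..√2, exp (-z ^ 2 / 2) * (exp (-z * u) * (1 - u ^ 2 / 2)) := by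
        rw [intervalIntegral.integral_const_mul, hF_integral]
    _ ≤ ∫ u in (0 : ℝ)..√2, exp (-(u + z) ^ 2 / 2) :=
        intervalIntegral.integral_mono_on (sqrt_nonneg 2)
          ((by fun_prop : Continuous _).intervalIntegrable _ _)
          ((by fun_prop : Continuous _).intervalIntegrable _ _) fun u _ ↦ hpoint u
    _ = ∫ x in z..z + √2, exp (-x ^ 2 / 2) := by
        rw [intervalIntegral.integral_comp_add_right (fun x ↦ exp (-x ^ 2 / 2)), zero_add, add_comm]

lemma gaussianReal_zero_one_real_Ioi_ge {z : ℝ} (hz : 1 ≤ z) :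
    exp (-z ^ 2 / 2) * ((z ^ 2 - 1) / z ^ 3) / √(2 * π) ≤ (gaussianReal 0 1).real (Ioi z) := by
  have hz_le : z ≤ z + √2 := le_add_of_nonneg_right (sqrt_nonneg 2)
  calc exp (-z ^ 2 / 2) * ((z ^ 2 - 1) / z ^ 3) / √(2 * π)
      ≤ (√(2 * π))⁻¹ * ∫ x in z..z + √2, exp (-x ^ 2 / 2) := by
        rw [div_eq_inv_mul]
        gcongr
        exact exp_neg_sq_div_two_mul_le_integral hz
    _ = ∫ x in Ioc z (z + √2), gaussianPDFReal 0 1 x := by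
        rw [← intervalIntegral.integral_const_mul, intervalIntegral.integral_of_le hz_le]
        simp [gaussianPDFReal]
    _ = (gaussianReal 0 1).real (Ioc z (z + √2)) := by
        rw [measureReal_def, gaussianReal_apply_eq_integral 0 one_ne_zero, ENNReal.toReal_ofReal]
        exact setIntegral_nonneg measurableSet_Ioc fun x _ ↦ gaussianPDFReal_nonneg 0 1 x
    _ ≤ (gaussianReal 0 1).real (Ioi z) := measureReal_mono Ioc_subset_Ioi_self

lemma gaussianReal_real_Ioi_add_mul_sqrt (m : ℝ) {v : ℝ≥0} (hv : v ≠ 0) (z : ℝ) :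
    (gaussianReal m v).real (Ioi (m + z * √v)) = (gaussianReal 0 1).real (Ioi z) := by
  have hσ : 0 < √(v : ℝ) := sqrt_pos.2 (by positivity)
  have hmap : (gaussianReal 0 1).map (fun x ↦ x * √v + m) = gaussianReal m v := by
    rw [show (fun x ↦ x * √v + m) = (· + m) ∘ (· * √v) from rfl,
      ← Measure.map_map (by fun_prop) (by fun_prop), gaussianReal_map_mul_const,
      gaussianReal_map_add_const, mul_zero, zero_add, mul_one]
    congr 1
    exact NNReal.eq (sq_sqrt v.2)
  have hpre : (fun x ↦ x * √v + m) ⁻¹' Ioi (m + z * √v) = Ioi z := by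
    ext x
    simp only [mem_preimage, mem_Ioi]
    rw [add_comm m, add_lt_add_iff_right, mul_lt_mul_iff_of_pos_right hσ]
  rw [← hmap, map_measureReal_apply (by fun_prop) measurableSet_Ioi, hpre]

lemma measureReal_exists_mem_eq_one_sub_pow {Ω ι β : Type*} [MeasurableSpace Ω] [MeasurableSpace β]
    [Fintype ι] {P : Measure Ω} [IsProbabilityMeasure P] {μ : Measure β} [IsProbabilityMeasure μ]
    {X : ι → Ω → β} (hmeas : ∀ i, Measurable (X i)) (hindep : iIndepFun X P)
    (hlaw : ∀ i, P.map (X i) = μ) {S : Set β} (hS : MeasurableSet S) :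
    P.real {ω | ∃ i, X i ω ∈ S} = 1 - (1 - μ.real S) ^ Fintype.card ι := by
  have hcompl : {ω | ∃ i, X i ω ∈ S}ᶜ = ⋂ i, X i ⁻¹' Sᶜ := by ext; simp
  have hmeas_set : MeasurableSet {ω | ∃ i, X i ω ∈ S} := by
    rw [← compl_compl {ω | ∃ i, X i ω ∈ S}, hcompl]
    exact (MeasurableSet.iInter fun i ↦ hmeas i hS.compl).compl
  have hinter : P.real (⋂ i, X i ⁻¹' Sᶜ) = μ.real Sᶜ ^ Fintype.card ι := by
    rw [measureReal_def, hindep.meas_iInter fun i ↦ ⟨Sᶜ, hS.compl, rfl⟩, ENNReal.toReal_prod]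
    simp_rw [← measureReal_def, ← map_measureReal_apply (hmeas _) hS.compl, hlaw,
      Finset.prod_const, Finset.card_univ]
  rw [← probReal_compl_eq_one_sub hS, ← hinter, ← hcompl, probReal_compl_eq_one_sub hmeas_set,
    sub_sub_cancel]

lemma sqrt_two_mul_pi_lt : √(2 * π) < 2.51 := by
  rw [sqrt_lt' (by norm_num)]
  linarith [pi_lt_d2]

lemma exp_seven_gt : (1096 : ℝ) < exp 7 := by
  calc (1096 : ℝ) < 2.7182818283 ^ 7 := by norm_num
    _ < exp 1 ^ 7 := by gcongr; exact exp_one_gt_d9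
    _ = exp 7 := by rw [← exp_nat_mul]; norm_num

lemma cubic_le_exp_of_nonneg {x : ℝ} (hx : 0 ≤ x) : 1 + x + x ^ 2 / 2 + x ^ 3 / 6 ≤ exp x := by
  have h := sum_le_exp_of_nonneg hx 4
  simp only [Finset.sum_range_succ, Finset.sum_range_zero, Nat.factorial] at h
  norm_num at h
  linarith

lemma two_mul_le_exp_mul_gaussian_tail_bound {L : ℝ} (hL : 25 ≤ L) :
    2 * L ≤ exp L * (exp (-(√L + 1) ^ 2 / 2) * (((√L + 1) ^ 2 - 1) / (√L + 1) ^ 3) / √(2 * π)) := by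
  obtain ⟨u, hu, hLu⟩ : ∃ u, 0 ≤ u ∧ √L = u + 5 :=
    ⟨√L - 5, sub_nonneg.2 (le_sqrt_of_sq_le (by linarith)), by ring⟩
  obtain rfl : L = (u + 5) ^ 2 := by rw [← hLu, sq_sqrt (by linarith)]
  rw [hLu, show u + 5 + 1 = u + 6 by ring]
  have hexp : 1096 * (1 + 4 * u + 8 * u ^ 2 + 32 * u ^ 3 / 3) ≤
      exp ((u + 5) ^ 2) * exp (-(u + 6) ^ 2 / 2) :=
    calc 1096 * (1 + 4 * u + 8 * u ^ 2 + 32 * u ^ 3 / 3) ≤ exp 7 * exp (4 * u) := by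
          gcongr
          · exact exp_seven_gt.le
          · linarith [cubic_le_exp_of_nonneg (by positivity : 0 ≤ 4 * u)]
      _ ≤ exp (u ^ 2 / 2) * (exp 7 * exp (4 * u)) :=
          le_mul_of_one_le_left (by positivity) (one_le_exp (by positivity))
      _ = exp ((u + 5) ^ 2) * exp (-(u + 6) ^ 2 / 2) := by
          simp only [← exp_add]
          ring_nf
  rw [show ∀ e₁ e₂ a b c : ℝ, e₁ * (e₂ * (a / b) / c) = e₁ * e₂ * a / (b * c) by intros; ring,
    le_div_iff₀ (by positivity)]
  calc 2 * (u + 5) ^ 2 * ((u + 6) ^ 3 * √(2 * π)) ≤ 2 * (u + 5) ^ 2 * ((u + 6) ^ 3 * 2.51) := by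
        gcongr
        exact sqrt_two_mul_pi_lt.le
    _ ≤ 1096 * (1 + 4 * u + 8 * u ^ 2 + 32 * u ^ 3 / 3) * ((u + 6) ^ 2 - 1) := by
        nlinarith [pow_nonneg hu 2, pow_nonneg hu 3, pow_nonneg hu 4, pow_nonneg hu 5]
    _ ≤ exp ((u + 5) ^ 2) * exp (-(u + 6) ^ 2 / 2) * ((u + 6) ^ 2 - 1) := by
        gcongr
        nlinarith

/-- **Maximum of i.i.d. Gaussians.** Let `r ≥ e²⁵` be an integer and let `X_1,…,X_r` be
i.i.d. Gaussian random variables with mean `m` and variance `s² > 0`. With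
`z = √(log r) + 1`, `P(max_j X_j > m + z·s) ≥ 1 − 1/r²`. -/
theorem max_iid_gaussians_tail {Ω : Type*} [MeasurableSpace Ω]
    (P : Measure Ω) [IsProbabilityMeasure P]
    (r : ℕ) (hr : Real.exp 25 ≤ (r : ℝ)) (m s : ℝ) (hs : 0 < s)
    (X : Fin r → Ω → ℝ) (hmeas : ∀ j, Measurable (X j))
    (hindep : iIndepFun X P)
    (hlaw : ∀ j, Measure.map (X j) P = gaussianReal m ⟨s ^ 2, sq_nonneg s⟩) :
    1 - 1 / (r : ℝ) ^ 2 ≤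
      (P {ω | ∃ j, m + (Real.sqrt (Real.log r) + 1) * s < X j ω}).toReal := by
  have hr0 : (0 : ℝ) < r := (exp_pos 25).trans_le hr
  have hL : 25 ≤ log r := by simpa using log_le_log (exp_pos 25) hr
  -- as a local `ℝ≥0`, `v` lets instance search find `IsProbabilityMeasure (gaussianReal m v)`
  set v : ℝ≥0 := ⟨s ^ 2, sq_nonneg s⟩
  have hv : v ≠ 0 := fun h ↦ hs.ne' (pow_eq_zero_iff two_ne_zero |>.1 (congrArg NNReal.toReal h))
  have hσ : √(v : ℝ) = s := sqrt_sq hs.le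
  set z := √(log r) + 1
  set p := (gaussianReal m v).real (Ioi (m + z * s))
  have hrp : 2 * log r ≤ r * p :=
    calc 2 * log r ≤ exp (log r) * (exp (-z ^ 2 / 2) * ((z ^ 2 - 1) / z ^ 3) / √(2 * π)) :=
          two_mul_le_exp_mul_gaussian_tail_bound hL
      _ ≤ r * p := by
          rw [exp_log hr0, show p = (gaussianReal 0 1).real (Ioi z) by
            rw [← gaussianReal_real_Ioi_add_mul_sqrt m hv, hσ]]
          gcongr
          exact gaussianReal_zero_one_real_Ioi_ge (by linarith [sqrt_nonneg (log r)])
  have hpow : (1 - p) ^ r ≤ 1 / (r : ℝ) ^ 2 :=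
    calc (1 - p) ^ r ≤ exp (-p) ^ r :=
          pow_le_pow_left₀ (sub_nonneg.2 measureReal_le_one) (one_sub_le_exp_neg p) r
      _ = exp (-(r * p)) := by rw [← exp_nat_mul, mul_neg]
      _ ≤ exp (-(2 * log r)) := by gcongr
      _ = 1 / (r : ℝ) ^ 2 := by
          rw [← Nat.cast_ofNat, ← log_pow, exp_neg, exp_log (by positivity), one_div]
  change _ ≤ P.real {ω | ∃ j, X j ω ∈ Ioi (m + z * s)}
  rw [measureReal_exists_mem_eq_one_sub_pow hmeas hindep hlaw measurableSet_Ioi, Fintype.card_fin]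
  linarith
end

section
/- For every real number r ≥ e^{25}: exp( −(√r · e^{−√(log r)}) / (√(2πe) · (√(log r) + 2)) ) ≤ 1/r². -/
open Real

/-- Key elementary inequality: for `s ≥ 5` and `0 < C ≤ 4.14`,
`2 s² C (s+2) ≤ exp(s²/2 − s)`. -/
lemma key_exp_poly_bound (s C : ℝ) (hs : 5 ≤ s) (hC0 : 0 < C) (hC : C ≤ 4.14) :
    2 * s ^ 2 * (C * (s + 2)) ≤ Real.exp (s ^ 2 / 2 - s) := by
  have hs0 : (0:ℝ) < s := by linarith
  have hrhs : 2 * s ^ 2 * (C * (s + 2)) ≤ 8.28 * s^3 + 16.56 * s^2 := by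
    nlinarith [mul_nonneg (by linarith : (0:ℝ) ≤ 4.14 - C)
      (by positivity : (0:ℝ) ≤ 2*s^3 + 4*s^2)]
  rcases le_total s 10 with h10 | h10
  · -- 5 ≤ s ≤ 10
    have h1 : (2.7182818283:ℝ) < Real.exp 1 := Real.exp_one_gt_d9
    have hsq : Real.exp 0.5 ^ 2 = Real.exp 1 := by
      rw [← Real.exp_nat_mul]; norm_num
    have hhalf : (1.64:ℝ) ≤ Real.exp 0.5 := by
      nlinarith [Real.exp_pos (0.5:ℝ)]
    have h17 : (1096:ℝ) ≤ Real.exp 1 ^ 7 := by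
      calc (1096:ℝ) ≤ 2.7182818283 ^ 7 := by norm_num
      _ ≤ Real.exp 1 ^ 7 := pow_le_pow_left₀ (by norm_num) h1.le 7
    have hE : (1700:ℝ) ≤ Real.exp 7.5 := by
      have h75 : Real.exp 7.5 = Real.exp 1 ^ 7 * Real.exp 0.5 := by
        rw [← Real.exp_nat_mul, ← Real.exp_add]; norm_num
      rw [h75]; nlinarith [Real.exp_pos (0.5:ℝ)]
    have hx : Real.exp 7.5 * (s^2/2 - s - 6.5) ≤ Real.exp (s^2/2 - s) := by
      have h := Real.add_one_le_exp (s^2/2 - s - 7.5)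
      calc Real.exp 7.5 * (s^2/2 - s - 6.5) ≤ Real.exp 7.5 * Real.exp (s^2/2 - s - 7.5) := by
            nlinarith [Real.exp_pos (7.5:ℝ)]
        _ = Real.exp (s^2/2 - s) := by rw [← Real.exp_add]; ring_nf
    have hpos : (0:ℝ) ≤ s^2/2 - s - 6.5 := by nlinarith
    have hmid : 8.28 * s^3 + 16.56 * s^2 ≤ 1700 * (s^2/2 - s - 6.5) := by
      nlinarith [mul_nonneg (sub_nonneg.2 hs) (sub_nonneg.2 h10), sq_nonneg (s-5), sq_nonneg (s-10)]
    have h2 : 1700 * (s^2/2 - s - 6.5) ≤ Real.exp 7.5 * (s^2/2 - s - 6.5) := by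
      nlinarith
    linarith
  · -- s ≥ 10
    have hx : (2/5 * s^2) ≤ s^2/2 - s := by nlinarith
    have hx0 : (0:ℝ) ≤ (s^2/2 - s)/7 := by nlinarith
    have hexp : ((s^2/2 - s)/7)^7 ≤ Real.exp (s^2/2 - s) := by
      have h1 : Real.exp (s^2/2 - s) = Real.exp ((s^2/2-s)/7) ^ 7 := by
        rw [← Real.exp_nat_mul]; ring_nf
      rw [h1]
      exact pow_le_pow_left₀ hx0 (by linarith [Real.add_one_le_exp ((s^2/2-s)/7)]) 7
    have h2 : ((2/35) * s^2)^7 ≤ ((s^2/2 - s)/7)^7 := by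
      apply pow_le_pow_left₀ (by positivity); linarith
    have h3 : (10:ℝ)^11 * s^3 ≤ s^14 := by
      have h := pow_le_pow_left₀ (by norm_num : (0:ℝ) ≤ 10) h10 11
      calc (10:ℝ)^11 * s^3 ≤ s^11 * s^3 := by
            exact mul_le_mul_of_nonneg_right h (by positivity)
      _ = s^14 := by ring
    have h4 : ((2/35) * s^2)^7 = (2/35:ℝ)^7 * s^14 := by ring
    nlinarith [pow_pos hs0 3]

/-- **Elementary inequality.** For every real `r ≥ e²⁵`:
`exp(−(√r·e^{−√(log r)})/(√(2πe)·(√(log r) + 2))) ≤ 1/r²`. -/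
theorem exp_neg_sqrt_bound (r : ℝ) (hr : Real.exp 25 ≤ r) :
    Real.exp (-(Real.sqrt r * Real.exp (-Real.sqrt (Real.log r))) /
        (Real.sqrt (2 * π * Real.exp 1) * (Real.sqrt (Real.log r) + 2))) ≤
      1 / r ^ 2 := by
  have hr0 : 0 < r := lt_of_lt_of_le (Real.exp_pos 25) hr
  set L := Real.log r with hLdef
  have hL : 25 ≤ L := by
    have := Real.log_le_log (Real.exp_pos 25) hr
    rwa [Real.log_exp] at this
  have hL0 : (0:ℝ) ≤ L := by linarith
  set s := Real.sqrt L with hsdef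
  have hs : 5 ≤ s := by
    have h25 : Real.sqrt 25 ≤ s := Real.sqrt_le_sqrt hL
    rwa [show (25:ℝ) = 5^2 by norm_num, Real.sqrt_sq (by norm_num : (0:ℝ) ≤ 5)] at h25
  have hs2 : s ^ 2 = L := Real.sq_sqrt hL0
  set C := Real.sqrt (2 * π * Real.exp 1) with hCdef
  have hC0 : 0 < C := by
    apply Real.sqrt_pos.2
    positivity
  have hC : C ≤ 4.14 := by
    have hpe : 2 * π * Real.exp 1 ≤ 4.14 ^ 2 := by
      nlinarith [Real.pi_lt_d6, Real.exp_one_lt_d9, Real.pi_pos, Real.exp_pos 1]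
    calc C ≤ Real.sqrt (4.14 ^ 2) := Real.sqrt_le_sqrt hpe
      _ = 4.14 := Real.sqrt_sq (by norm_num)
  have hrhs : 1 / r ^ 2 = Real.exp (-(2 * L)) := by
    rw [Real.exp_neg]
    congr 1
    rw [show (2:ℝ) * L = L + L by ring, Real.exp_add, ← Real.exp_log hr0]
    ring
  have hsr : Real.sqrt r = Real.exp (L / 2) := by
    rw [Real.exp_half, Real.exp_log hr0]
  rw [hrhs, hsr]
  apply Real.exp_le_exp.2
  have hnum : Real.exp (L / 2) * Real.exp (-s) = Real.exp (s^2/2 - s) := by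
    rw [← Real.exp_add, hs2]; ring_nf
  rw [hnum]
  have hden : 0 < C * (s + 2) := by positivity
  rw [div_le_iff₀ hden] at *
  · have hkey := key_exp_poly_bound s C hs hC0 hC
    nlinarith [Real.exp_pos (s^2/2 - s), hs2]
end

section
/- Let β ∈ [0,1) and let T ≥ 2 be an integer with (1−β)·log T ≥ 1, and set γ = 1 − T^{−(1−β)}. Then D(γ) = log((1−γ)²·log(1/(1−γ)))/log γ satisfies D(γ) ≤ 2·T^{1−β}·log T. -/
open Real

noncomputable section

/-- **Bound on the transient-phase length.** Let `β ∈ [0,1)` and let `T ≥ 2` be an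
integer with `(1−β)·log T ≥ 1`; set `γ = 1 − T^{−(1−β)}`. Then
`D(γ) ≤ 2·T^{1−β}·log T`. -/
theorem Dgamma_le_of_tuned (β : ℝ) (hβ : β ∈ Set.Ico (0 : ℝ) 1) (T : ℕ) (hT : 2 ≤ T)
    (hlog : 1 ≤ (1 - β) * Real.log T) :
    Dgamma (1 - (T : ℝ) ^ (-(1 - β))) ≤ 2 * (T : ℝ) ^ (1 - β) * Real.log T := by
  obtain ⟨hβ0, hβ1⟩ := hβ
  have ht2 : (2:ℝ) ≤ (T:ℝ) := by exact_mod_cast hT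
  have ht0 : (0:ℝ) < (T:ℝ) := by linarith
  set L : ℝ := (1 - β) * Real.log T with hL
  have hL1 : 1 ≤ L := hlog
  set x : ℝ := (T:ℝ) ^ (-(1-β)) with hx
  have hx0 : 0 < x := Real.rpow_pos_of_pos ht0 _
  have hlogx : Real.log x = -L := by
    rw [hx, Real.log_rpow ht0]; ring
  have hxe : x = Real.exp (-L) := by
    rw [← Real.exp_log hx0, hlogx]
  have hx1 : x < 1 := by
    rw [hxe]; exact Real.exp_lt_one_iff.mpr (by linarith)
  have h1x0 : 0 < 1 - x := by linarith
  have hlog1x : Real.log (1 - x) ≤ -x := by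
    have := Real.log_le_sub_one_of_pos h1x0
    linarith
  have hlog1xneg : Real.log (1 - x) < 0 := Real.log_neg h1x0 (by linarith)
  have hlogL : Real.log L ≤ L - 1 := Real.log_le_sub_one_of_pos (by linarith)
  have hlogL0 : 0 ≤ Real.log L := Real.log_nonneg hL1
  have hnum : Real.log ((1 - (1 - x))^2 * Real.log (1/(1 - (1-x)))) = -(2*L) + Real.log L := by
    have h1 : (1:ℝ) - (1 - x) = x := by ring
    have h2 : Real.log (1/x) = L := by
      rw [one_div, Real.log_inv, hlogx]; ring
    rw [h1, Real.log_mul (by positivity) (by rw [h2]; linarith), Real.log_pow, h2, hlogx]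
    push_cast; ring
  have hD : Dgamma (1 - x) = (2*L - Real.log L) / (-Real.log (1 - x)) := by
    rw [Dgamma, hnum, div_neg, ← neg_div]
    ring_nf
  rw [hD]
  have hy0 : 0 < (T:ℝ) ^ (1-β) := Real.rpow_pos_of_pos ht0 _
  have hxy : x * (T:ℝ)^(1-β) = 1 := by
    rw [hx, ← Real.rpow_add ht0]; norm_num
  have hlogT0 : 0 < Real.log T := Real.log_pos (by linarith)
  have step1 : (2*L - Real.log L) / (-Real.log (1 - x)) ≤ (2*L - Real.log L) / x :=
    div_le_div_of_nonneg_left (by linarith) hx0 (by linarith)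
  have step2 : (2*L - Real.log L) / x ≤ (2*L) / x := by
    gcongr
    linarith
  have step3 : (2*L) / x = 2 * L * (T:ℝ)^(1-β) := by
    field_simp
    nlinarith [hxy]
  have step4 : 2 * L * (T:ℝ)^(1-β) ≤ 2 * (T:ℝ)^(1-β) * Real.log T := by
    have : L ≤ Real.log T := by nlinarith
    nlinarith
  linarith [step2.trans (le_of_eq step3)]
end
end
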